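/- If M₀ is an admissible lattice in N₀, then the W₀-module (M₀ + τ(M₀))/M₀ has length at most 1; equivalently, dim_𝔽 (M₀ + τ(M₀))/M₀ ≤ 1. -/

import Mathlib

/-!
Suppose `(M₀ + τM₀)/M₀` had length at least `2`. Since `M₀ + τM₀ ⊆ τ(M₀^∨)` and
`M₀ ⊂² τ(M₀^∨)`, this forces `M₀ + τM₀ = τ(M₀^∨)`. Dualizing, using that `τ` commutes with
duality and `M₀^∨∨ = M₀`, gives `τM₀ = M₀^∨ ∩ τ(M₀^∨) ⊇ M₀`; hence `τM₀ = M₀ + τM₀ = τ(M₀^∨)`,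
so `M₀ = M₀^∨`, contradicting `M₀ ⊂² M₀^∨`.
-/

noncomputable section

namespace QURZ

variable {W₀ : Type*} [CommRing W₀]

/-- The length of `B / A`: the Krull dimension of the interval `[A, B]`
in the lattice of submodules. -/
noncomputable def relLength {M : Type*} [AddCommGroup M] [Module W₀ M]
    (A B : Submodule W₀ M) : WithBot ℕ∞ :=
  Order.krullDim (Set.Icc A B)

/-- `SubIdx A B d` means `A ⊆ B` and the quotient `B/A` has length `d`
(written `A ⊂^d B` in the paper). -/
def SubIdx {M : Type*} [AddCommGroup M] [Module W₀ M]
    (A B : Submodule W₀ M) (d : ℕ) : Prop :=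
  A ≤ B ∧ relLength A B = ((d : ℕ∞) : WithBot ℕ∞)

/-- The image `c • A` of a submodule `A` under scalar multiplication by `c`. -/
def smulLat {M : Type*} [AddCommGroup M] [Module W₀ M] (c : W₀) (A : Submodule W₀ M) :
    Submodule W₀ M where
  carrier := {x | ∃ m ∈ A, c • m = x}
  zero_mem' := ⟨0, A.zero_mem, smul_zero c⟩
  add_mem' := by
    rintro a b ⟨m, hm, rfl⟩ ⟨n, hn, rfl⟩
    exact ⟨m + n, A.add_mem hm hn, smul_add c m n⟩
  smul_mem' := by
    rintro d x ⟨m, hm, rfl⟩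
    exact ⟨d • m, A.smul_mem d hm, by rw [smul_smul, smul_smul, mul_comm]⟩

/-- The image of a submodule under a `σ₀`-semilinear map, where `σ₀` is a ring
automorphism. -/
def mapLat {M M' : Type*} [AddCommGroup M] [Module W₀ M] [AddCommGroup M'] [Module W₀ M']
    {σ₀ : W₀ ≃+* W₀} (g : M →ₛₗ[(σ₀ : W₀ →+* W₀)] M') (A : Submodule W₀ M) :
    Submodule W₀ M' where
  carrier := g '' A
  zero_mem' := ⟨0, A.zero_mem, map_zero g⟩
  add_mem' := by
    rintro a b ⟨m, hm, rfl⟩ ⟨n, hn, rfl⟩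
    exact ⟨m + n, A.add_mem hm hn, map_add g m n⟩
  smul_mem' := by
    rintro c x ⟨m, hm, rfl⟩
    refine ⟨σ₀.symm c • m, A.smul_mem _ hm, ?_⟩
    rw [map_smulₛₗ]
    simp

variable {K₀ : Type*} [Field K₀] [Algebra W₀ K₀]
variable {N₀ : Type*} [AddCommGroup N₀] [Module K₀ N₀] [Module W₀ N₀] [IsScalarTower W₀ K₀ N₀]

/-- A lattice: a finitely generated `W₀`-submodule spanning the ambient space over `K₀`. -/
def IsLattice (A : Submodule W₀ N₀) : Prop :=
  A.FG ∧ Submodule.span K₀ (A : Set N₀) = ⊤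

/-- The dual lattice with respect to a bilinear form, consisting of the vectors
pairing into `W₀` with all elements of `A`. -/
def dualLat (form : N₀ →ₗ[K₀] N₀ →ₗ[K₀] K₀) (A : Submodule W₀ N₀) : Submodule W₀ N₀ where
  carrier := {x | ∀ y ∈ A, form x y ∈ (algebraMap W₀ K₀).range}
  zero_mem' := fun y _ => by rw [map_zero, LinearMap.zero_apply]; exact zero_mem _
  add_mem' := by
    intro a b ha hb y hy
    rw [map_add, LinearMap.add_apply]
    exact add_mem (ha y hy) (hb y hy)
  smul_mem' := by
    intro c x hx y hy
    rw [← IsScalarTower.algebraMap_smul K₀ c x, map_smul, LinearMap.smul_apply, smul_eq_mul]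
    exact mul_mem (RingHom.mem_range_self _ c) (hx y hy)

/-- An admissible lattice: `p M₀^∨ ⊆ M₀ ⊂² M₀^∨` and `p τ(M₀^∨) ⊆ M₀ ⊂² τ(M₀^∨)`.
These are the `𝔽`-points of the reduced quaternionic unitary Rapoport–Zink space `ℳ`
with paramodular level. -/
def IsAdmissible (p : ℕ) (form : N₀ →ₗ[K₀] N₀ →ₗ[K₀] K₀)
    {σ₀ : W₀ ≃+* W₀} (τ : N₀ →ₛₗ[(σ₀ : W₀ →+* W₀)] N₀) (M₀ : Submodule W₀ N₀) : Prop :=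
  IsLattice (K₀ := K₀) M₀ ∧
  smulLat (p : W₀) (dualLat form M₀) ≤ M₀ ∧
  SubIdx M₀ (dualLat form M₀) 2 ∧
  smulLat (p : W₀) (mapLat τ (dualLat form M₀)) ≤ M₀ ∧
  SubIdx M₀ (mapLat τ (dualLat form M₀)) 2

/-- A web pair `(S₀, T₀)` for an admissible lattice `M₀`:
`pM₀^∨ ⊂¹ S₀ ⊂¹ M₀ ⊂¹ T₀ ⊂¹ M₀^∨`, `pτ(T₀^∨) ⊆ S₀ ⊆ τ(T₀^∨)` and
`pτ(S₀^∨) ⊆ T₀ ⊆ τ(S₀^∨)`.  Web pairs for `M₀` are the points of the fiber over `M₀`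
of the projection from Iwahori level `ℳ_Iw(𝔽)` to `ℳ(𝔽)`. -/
def IsWebPair (p : ℕ) (form : N₀ →ₗ[K₀] N₀ →ₗ[K₀] K₀)
    {σ₀ : W₀ ≃+* W₀} (τ : N₀ →ₛₗ[(σ₀ : W₀ →+* W₀)] N₀)
    (M₀ S₀ T₀ : Submodule W₀ N₀) : Prop :=
  IsLattice (K₀ := K₀) S₀ ∧ IsLattice (K₀ := K₀) T₀ ∧
  SubIdx (smulLat (p : W₀) (dualLat form M₀)) S₀ 1 ∧
  SubIdx S₀ M₀ 1 ∧ SubIdx M₀ T₀ 1 ∧ SubIdx T₀ (dualLat form M₀) 1 ∧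
  smulLat (p : W₀) (mapLat τ (dualLat form T₀)) ≤ S₀ ∧
  S₀ ≤ mapLat τ (dualLat form T₀) ∧
  smulLat (p : W₀) (mapLat τ (dualLat form S₀)) ≤ T₀ ∧
  T₀ ≤ mapLat τ (dualLat form S₀)

section Length

open Order

variable {α : Type*} [PartialOrder α]

lemma krullDim_Icc_self_nonpos (a : α) : krullDim (Set.Icc a a) ≤ 0 := by
  have : Subsingleton (Set.Icc a a) := by rw [Set.Icc_self]; infer_instance
  exact krullDim_nonpos_of_subsingleton

lemma krullDim_Icc_le_of_lt {a b c : α} (hab : a ≤ b) (hbc : b < c) {n : ℕ}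
    (hac : krullDim (Set.Icc a c) ≤ (n + 1 : ℕ)) : krullDim (Set.Icc a b) ≤ n := by
  refine iSup_le fun l => ?_
  let incl : Set.Icc a b → Set.Icc a c := fun x => ⟨x, x.2.1, x.2.2.trans hbc.le⟩
  have hincl : StrictMono incl := fun _ _ h => h
  let l' : LTSeries (Set.Icc a c) :=
    (LTSeries.map l incl hincl).snoc ⟨c, hab.trans hbc.le, le_rfl⟩ <| by
      change (LTSeries.map l incl hincl).last < _
      rw [LTSeries.last_map]
      exact l.last.2.2.trans_lt hbc
  have : ((l.length + 1 : ℕ) : WithBot ℕ∞) ≤ (n + 1 : ℕ) := l'.length_le_krullDim.trans hac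
  exact_mod_cast Nat.succ_le_succ_iff.mp (by exact_mod_cast this)

end Length

section SemilinearImage

variable {M M' : Type*} [AddCommGroup M] [Module W₀ M] [AddCommGroup M'] [Module W₀ M']
  {σ₀ : W₀ ≃+* W₀}

lemma mapLat_mono (g : M →ₛₗ[(σ₀ : W₀ →+* W₀)] M') : Monotone (mapLat g) := by
  rintro A B h _ ⟨m, hm, rfl⟩
  exact ⟨m, h hm, rfl⟩

lemma mapLat_injective {g : M →ₛₗ[(σ₀ : W₀ →+* W₀)] M'} (hg : Function.Injective g) :
    Function.Injective (mapLat g) := by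
  intro A B h
  ext m
  have key : ∀ {A B : Submodule W₀ M}, mapLat g A = mapLat g B → m ∈ A → m ∈ B := by
    intro A B h hm
    obtain ⟨n, hn, hgn⟩ : g m ∈ mapLat g B := h ▸ ⟨m, hm, rfl⟩
    rwa [← hg hgn]
  exact ⟨key h, key h.symm⟩

end SemilinearImage

section Duality

variable {form : N₀ →ₗ[K₀] N₀ →ₗ[K₀] K₀}

lemma dualLat_eq_dualSubmodule (A : Submodule W₀ N₀) :
    dualLat form A = LinearMap.BilinForm.dualSubmodule form A := by
  ext x
  simp [dualLat, LinearMap.BilinForm.mem_dualSubmodule, Submodule.mem_one, RingHom.mem_range]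

lemma dualLat_sup (A B : Submodule W₀ N₀) :
    dualLat form (A ⊔ B) = dualLat form A ⊓ dualLat form B := by
  ext x
  refine ⟨fun h => ⟨fun y hy => h y (Submodule.mem_sup_left hy),
    fun y hy => h y (Submodule.mem_sup_right hy)⟩, ?_⟩
  rintro ⟨hA, hB⟩ y hy
  obtain ⟨a, ha, b, hb, rfl⟩ := Submodule.mem_sup.mp hy
  rw [map_add]
  exact add_mem (hA a ha) (hB b hb)

lemma dualLat_mapLat {σ : K₀ ≃+* K₀} {σ₀ : W₀ ≃+* W₀}
    (hσ : ∀ c : W₀, algebraMap W₀ K₀ (σ₀ c) = σ (algebraMap W₀ K₀ c))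
    {τ : N₀ →ₛₗ[(σ₀ : W₀ →+* W₀)] N₀} (hτ : Function.Surjective τ)
    (hτ_form : ∀ x y, form (τ x) (τ y) = σ (form x y)) (A : Submodule W₀ N₀) :
    dualLat form (mapLat τ A) = mapLat τ (dualLat form A) := by
  have hrange (v : K₀) : σ v ∈ (algebraMap W₀ K₀).range ↔ v ∈ (algebraMap W₀ K₀).range := by
    refine ⟨fun ⟨c, hc⟩ => ⟨σ₀.symm c, σ.injective ?_⟩, fun ⟨c, hc⟩ => ⟨σ₀ c, hc ▸ hσ c⟩⟩
    rw [← hσ, RingEquiv.apply_symm_apply, hc]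
  ext x
  obtain ⟨z, rfl⟩ := hτ x
  constructor
  · intro hx
    refine ⟨z, fun y hy => (hrange _).mp ?_, rfl⟩
    simpa only [hτ_form] using hx (τ y) ⟨y, hy, rfl⟩
  · rintro ⟨z', hz', hzz'⟩ _ ⟨m, hm, rfl⟩
    rw [← hzz', hτ_form]
    exact (hrange _).mpr (hz' m hm)

lemma dualLat_flip_of_isAlt (halt : form.IsAlt) (A : Submodule W₀ N₀) :
    dualLat form.flip A = dualLat form A := by
  ext x
  refine forall₂_congr fun y _ => ?_
  rw [LinearMap.flip_apply, ← halt.neg, neg_mem_iff]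

lemma span_range_extendOfIsLattice [IsFractionRing W₀ K₀] {M : Submodule W₀ N₀}
    [M.IsLattice K₀] {κ : Type*} (b : Module.Basis κ W₀ M) :
    Submodule.span W₀ (Set.range (b.extendOfIsLattice K₀)) = M := by
  have : Set.range (b.extendOfIsLattice K₀) = M.subtype '' Set.range b := by
    rw [← Set.range_comp]
    congr 1
    ext k
    simp
  rw [this, ← Submodule.map_span, b.span_eq, Submodule.map_top, Submodule.range_subtype]

lemma dualLat_dualLat [IsDomain W₀] [IsPrincipalIdealRing W₀] [IsFractionRing W₀ K₀]
    (halt : form.IsAlt) (hsep : form.SeparatingLeft) {M : Submodule W₀ N₀}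
    (hM : IsLattice (K₀ := K₀) M) :
    dualLat form (dualLat form M) = M := by
  have : M.IsLattice K₀ := ⟨hM.1, hM.2⟩
  rw [← span_range_extendOfIsLattice (Module.Free.chooseBasis W₀ M)]
  nth_rw 2 [← dualLat_flip_of_isAlt halt]
  rw [dualLat_eq_dualSubmodule, dualLat_eq_dualSubmodule]
  exact LinearMap.BilinForm.dualSubmodule_dualSubmodule_flip_of_basis _
    (halt.isRefl.nondegenerate_iff_separatingLeft.mpr hsep) _

lemma eq_dualLat_of_sup_mapLat_eq [IsDomain W₀] [IsPrincipalIdealRing W₀] [IsFractionRing W₀ K₀]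
    (halt : form.IsAlt) (hsep : form.SeparatingLeft) {σ : K₀ ≃+* K₀} {σ₀ : W₀ ≃+* W₀}
    (hσ : ∀ c : W₀, algebraMap W₀ K₀ (σ₀ c) = σ (algebraMap W₀ K₀ c))
    {τ : N₀ →ₛₗ[(σ₀ : W₀ →+* W₀)] N₀} (hτ : Function.Bijective τ)
    (hτ_form : ∀ x y, form (τ x) (τ y) = σ (form x y))
    {M : Submodule W₀ N₀} (hM : IsLattice (K₀ := K₀) M) (hMD : M ≤ dualLat form M)
    (hMτD : M ≤ mapLat τ (dualLat form M))
    (h : M ⊔ mapLat τ M = mapLat τ (dualLat form M)) : M = dualLat form M := by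
  have hτM : mapLat τ M = dualLat form M ⊓ mapLat τ (dualLat form M) :=
    calc mapLat τ M = dualLat form (mapLat τ (dualLat form M)) := by
          rw [dualLat_mapLat hσ hτ.2 hτ_form, dualLat_dualLat halt hsep hM]
      _ = dualLat form (M ⊔ mapLat τ M) := by rw [h]
      _ = _ := by rw [dualLat_sup, dualLat_mapLat hσ hτ.2 hτ_form]
  have hMτM : M ≤ mapLat τ M := hτM ▸ le_inf hMD hMτD
  refine mapLat_injective hτ.1 ?_
  rw [← h, sup_eq_right.mpr hMτM]

end Duality

theorem statement_2_general
    (p : ℕ)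
    {W₀ : Type*} [CommRing W₀] [IsDomain W₀] [IsDiscreteValuationRing W₀]
    {K₀ : Type*} [Field K₀] [Algebra W₀ K₀] [IsFractionRing W₀ K₀]
    (σ : K₀ ≃+* K₀) (σ₀ : W₀ ≃+* W₀)
    (hσ : ∀ c : W₀, algebraMap W₀ K₀ (σ₀ c) = σ (algebraMap W₀ K₀ c))
    {N₀ : Type*} [AddCommGroup N₀] [Module K₀ N₀] [Module W₀ N₀] [IsScalarTower W₀ K₀ N₀]
    (form : N₀ →ₗ[K₀] N₀ →ₗ[K₀] K₀)
    (halt : ∀ x, form x x = 0)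
    (hnondeg : ∀ x, (∀ y, form x y = 0) → x = 0)
    (τ : N₀ →ₛₗ[(σ₀ : W₀ →+* W₀)] N₀)
    (hτ_bij : Function.Bijective τ)
    (hτ_form : ∀ x y, form (τ x) (τ y) = σ (form x y))
    (M₀ : Submodule W₀ N₀)
    (hM₀ : IsAdmissible p form τ M₀) :
    relLength M₀ (M₀ ⊔ mapLat τ M₀) ≤ ((1 : ℕ∞) : WithBot ℕ∞) := by
  obtain ⟨hlat, -, ⟨hMD, hMD2⟩, -, ⟨hMτD, hMτD2⟩⟩ := hM₀
  by_contra hlen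
  have heq : M₀ ⊔ mapLat τ M₀ = mapLat τ (dualLat form M₀) := by
    refine (sup_le hMτD (mapLat_mono τ hMD)).eq_of_not_lt fun hlt => hlen ?_
    exact_mod_cast krullDim_Icc_le_of_lt le_sup_left hlt (n := 1) (by exact_mod_cast hMτD2.le)
  have hself := eq_dualLat_of_sup_mapLat_eq halt hnondeg hσ hτ_bij hτ_form hlat hMD hMτD heq
  rw [← hself] at hMD2
  have h0 : relLength M₀ M₀ ≤ 0 := krullDim_Icc_self_nonpos M₀
  rw [hMD2] at h0
  exact absurd h0 (by decide)

/-- If `M₀` is an admissible lattice in `N₀`, then the `W₀`-module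
`(M₀ + τ(M₀))/M₀` has length at most `1`. -/
theorem statement_2
    (p : ℕ) (hp : Nat.Prime p) (hp_odd : p ≠ 2)
    {W₀ : Type*} [CommRing W₀] [IsDomain W₀] [IsDiscreteValuationRing W₀]
    {K₀ : Type*} [Field K₀] [Algebra W₀ K₀] [IsFractionRing W₀ K₀]
    (hp_irr : Irreducible (p : W₀))
    (σ : K₀ ≃+* K₀) (σ₀ : W₀ ≃+* W₀)
    (hσ : ∀ c : W₀, algebraMap W₀ K₀ (σ₀ c) = σ (algebraMap W₀ K₀ c))
    {N₀ : Type*} [AddCommGroup N₀] [Module K₀ N₀] [Module W₀ N₀] [IsScalarTower W₀ K₀ N₀]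
    (hdim : Module.finrank K₀ N₀ = 4)
    (form : N₀ →ₗ[K₀] N₀ →ₗ[K₀] K₀)
    (halt : ∀ x, form x x = 0)
    (hnondeg : ∀ x, (∀ y, form x y = 0) → x = 0)
    (τ : N₀ →ₛₗ[(σ₀ : W₀ →+* W₀)] N₀)
    (hτ_bij : Function.Bijective τ)
    (hτ_semilinear : ∀ (a : K₀) (x : N₀), τ (a • x) = σ a • τ x)
    (hτ_form : ∀ x y, form (τ x) (τ y) = σ (form x y))
    (M₀ : Submodule W₀ N₀)
    (hM₀ : IsAdmissible p form τ M₀) :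
    relLength M₀ (M₀ ⊔ mapLat τ M₀) ≤ ((1 : ℕ∞) : WithBot ℕ∞) :=
  statement_2_general p σ σ₀ hσ form halt hnondeg τ hτ_bij hτ_form M₀ hM₀

end QURZ
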